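/- Let Δ ⊂ ℝⁿ be a simple polytope and suppose H = Σ_i β_i η_i where Σ_{i∈I} β_i = 0 for every equivalence class of facets I (H is inessential). Then ⟨H, c_Δ(κ)⟩ = Σ_i β_i κ_i for all κ in the chamber C_Δ; in particular H is mass linear. -/

import Mathlib

open MeasureTheory Function Set

noncomputable section

namespace MassLinearPaper

def dotp {n : ℕ} (v x : Fin n → ℝ) : ℝ := ∑ j, v j * x j

def polytope {n N : ℕ} (η : Fin N → Fin n → ℝ) (κ : Fin N → ℝ) : Set (Fin n → ℝ) :=
  {x | ∀ i, dotp (η i) x ≤ κ i}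

def facet {n N : ℕ} (η : Fin N → Fin n → ℝ) (κ : Fin N → ℝ) (i : Fin N) : Set (Fin n → ℝ) :=
  {x ∈ polytope η κ | dotp (η i) x = κ i}

/-- A polytope is simple if at each point the active conormals are linearly independent. -/
def IsSimplePoly {n N : ℕ} (η : Fin N → Fin n → ℝ) (κ : Fin N → ℝ) : Prop :=
  ∀ x ∈ polytope η κ,
    LinearIndependent ℝ (fun i : {i : Fin N // dotp (η i) x = κ i} => η i.1)

/-- Two support vectors give analogous polytopes: the same collections of facets intersect. -/
def Analogous {n N : ℕ} (η : Fin N → Fin n → ℝ) (κ κ' : Fin N → ℝ) : Prop :=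
  ∀ I : Finset (Fin N),
    (⋂ i ∈ I, facet η κ' i).Nonempty ↔ (⋂ i ∈ I, facet η κ i).Nonempty

/-- The chamber of Δ(κ). -/
def chamber {n N : ℕ} (η : Fin N → Fin n → ℝ) (κ : Fin N → ℝ) : Set (Fin N → ℝ) :=
  connectedComponentIn {κ' | IsSimplePoly η κ' ∧ Analogous η κ κ'} κ

/-- Standing hypotheses: simple, bounded, nonempty interior, all facets nonempty. -/
def GoodPolytope {n N : ℕ} (η : Fin N → Fin n → ℝ) (κ : Fin N → ℝ) : Prop :=
  IsSimplePoly η κ ∧ Bornology.IsBounded (polytope η κ) ∧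
    (interior (polytope η κ)).Nonempty ∧ ∀ i, (facet η κ i).Nonempty

/-- The center of mass of Δ(κ). -/
def centroid {n N : ℕ} (η : Fin N → Fin n → ℝ) (κ : Fin N → ℝ) : Fin n → ℝ :=
  ⨍ x in polytope η κ, x

/-- The volume of Δ(κ) as a function of κ. -/
def volFn {n N : ℕ} (η : Fin N → Fin n → ℝ) : (Fin N → ℝ) → ℝ :=
  fun κ => (volume (polytope η κ)).toReal

/-- Partial derivative with respect to the i-th support number. -/
def pd {N : ℕ} (i : Fin N) (f : (Fin N → ℝ) → ℝ) : (Fin N → ℝ) → ℝ :=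
  fun κ => fderiv ℝ f κ (Pi.single i 1)

def face {n N : ℕ} (η : Fin N → Fin n → ℝ) (κ : Fin N → ℝ) (S : Finset (Fin N)) :
    Set (Fin n → ℝ) :=
  ⋂ i ∈ S, facet η κ i

/-- Centroid of a face with respect to Hausdorff measure of the appropriate dimension. -/
def faceCentroid {n N : ℕ} (η : Fin N → Fin n → ℝ) (κ : Fin N → ℝ) (S : Finset (Fin N)) :
    Fin n → ℝ :=
  ⨍ x in face η κ S, x ∂(μH[(n : ℝ) - S.card])

/-- The facet `F i` is H-symmetric: `⟨H, c(κ)⟩` does not depend on `κ i` on the chamber. -/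
def SymmFacet {n N : ℕ} (η : Fin N → Fin n → ℝ) (κ : Fin N → ℝ) (H : Fin n → ℝ)
    (i : Fin N) : Prop :=
  ∀ κ₁ ∈ chamber η κ, ∀ κ₂ ∈ chamber η κ, (∀ j, j ≠ i → κ₁ j = κ₂ j) →
    dotp H (centroid η κ₁) = dotp H (centroid η κ₂)

/-- H is mass linear with coefficients γ and constant C. -/
def MassLinear {n N : ℕ} (η : Fin N → Fin n → ℝ) (κ : Fin N → ℝ) (H : Fin n → ℝ)
    (γ : Fin N → ℝ) (C : ℝ) : Prop :=
  ∀ κ' ∈ chamber η κ, dotp H (centroid η κ') = ∑ i, γ i * κ' i + C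

/-- A facet is pervasive if it meets every other facet. -/
def Pervasive {n N : ℕ} (η : Fin N → Fin n → ℝ) (κ : Fin N → ℝ) (i : Fin N) : Prop :=
  ∀ j, j ≠ i → (facet η κ i ∩ facet η κ j).Nonempty

/-- A facet is flat if the conormals of all other facets meeting it lie in a hyperplane. -/
def FlatFacet {n N : ℕ} (η : Fin N → Fin n → ℝ) (κ : Fin N → ℝ) (i : Fin N) : Prop :=
  ∃ ξ : Fin n → ℝ, ξ ≠ 0 ∧
    ∀ j, j ≠ i → (facet η κ i ∩ facet η κ j).Nonempty → dotp (η j) ξ = 0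

/-- Equivalence of facets, via the criterion of Lemma 4.4. -/
def FacetEquiv {n N : ℕ} (η : Fin N → Fin n → ℝ) (i j : Fin N) : Prop :=
  i = j ∨ ∃ ξ : Fin n → ℝ, dotp (η i) ξ = 1 ∧ dotp (η j) ξ = -1 ∧
    ∀ k, k ≠ i → k ≠ j → dotp (η k) ξ = 0

def IsEquivClass {n N : ℕ} (η : Fin N → Fin n → ℝ) (I : Finset (Fin N)) : Prop :=
  I.Nonempty ∧ (∀ i ∈ I, ∀ j ∈ I, FacetEquiv η i j) ∧
    ∀ i ∈ I, ∀ j, FacetEquiv η i j → j ∈ I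

/-- H is inessential. -/
def Inessential {n N : ℕ} (η : Fin N → Fin n → ℝ) (H : Fin n → ℝ) : Prop :=
  ∃ β : Fin N → ℝ, H = ∑ i, β i • η i ∧
    ∀ I : Finset (Fin N), IsEquivClass η I → ∑ i ∈ I, β i = 0

end MassLinearPaper

open MassLinearPaper

/-!
If `F i ∼ F j` with witness `ξ`, the oblique reflection `x ↦ x + (κ i - κ j - ⟪η i - η j, x⟫) ξ`
is a volume-preserving affine involution of `Δ(κ)` exchanging the two facets, so the centroid `c`
satisfies `⟪η i, c⟫ - κ i = ⟪η j, c⟫ - κ j`. Thus `γ i := ⟪η i, c⟫ - κ i` is constant on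
equivalence classes of facets, on which `β` sums to zero, and `⟪H, c⟫ - ∑ β i κ i = ∑ β i γ i = 0`.

For this, `Δ(κ')` must be compact with positive volume for every `κ'` in the chamber: it is bounded
because the conormals positively span (`Δ(κ)` being bounded), and it has interior points because it
is simple and nonempty.
-/

theorem sum_mul_eq_zero_of_sum_class_eq_zero {ι : Type*} [Fintype ι] (r : Setoid ι)
    [DecidableRel r.r] {β γ : ι → ℝ} (hγ : ∀ i j, r i j → γ i = γ j)
    (hβ : ∀ i, ∑ j with r i j, β j = 0) : ∑ i, β i * γ i = 0 := by
  classical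
  rw [← Finset.sum_image' (s := Finset.univ) (g := Quotient.mk r) (f := fun _ => (0 : ℝ)),
    Finset.sum_const_zero]
  intro i _
  have hclass : ∀ j, (⟦j⟧ : Quotient r) = ⟦i⟧ ↔ r i j := fun j => Quotient.eq.trans ⟨r.symm, r.symm⟩
  simp only [hclass]
  rw [Finset.sum_congr rfl fun j hj => by rw [← hγ i j (Finset.mem_filter.mp hj).2],
    ← Finset.sum_mul, hβ i, zero_mul]

theorem LinearMap.measurePreserving_of_involutive {ι : Type*} [Fintype ι]
    (A : (ι → ℝ) →ₗ[ℝ] ι → ℝ) (hA : Function.Involutive A) : MeasurePreserving A := by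
  have hdet : LinearMap.det A * LinearMap.det A = 1 := by
    rw [← LinearMap.det_comp, show A ∘ₗ A = LinearMap.id from LinearMap.ext hA, LinearMap.det_id]
  refine ⟨A.continuous_of_finiteDimensional.measurable, ?_⟩
  rw [Real.map_linearMap_volume_pi_eq_smul_volume_pi (left_ne_zero_of_mul_eq_one hdet)]
  rcases mul_self_eq_one_iff.mp hdet with h | h <;> simp [h]

namespace MassLinearPaper

open Filter Topology

variable {n N : ℕ}

theorem dotp_add_right (v x y : Fin n → ℝ) : dotp v (x + y) = dotp v x + dotp v y :=
  dotProduct_add v x y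

theorem dotp_neg_right (v x : Fin n → ℝ) : dotp v (-x) = -dotp v x :=
  dotProduct_neg v x

theorem dotp_smul_right (v : Fin n → ℝ) (t : ℝ) (x : Fin n → ℝ) :
    dotp v (t • x) = t * dotp v x :=
  dotProduct_smul t v x

theorem dotp_sub_left (v w x : Fin n → ℝ) : dotp (v - w) x = dotp v x - dotp w x :=
  sub_dotProduct v w x

theorem dotp_smul_left (t : ℝ) (v x : Fin n → ℝ) : dotp (t • v) x = t * dotp v x :=
  smul_dotProduct t v x

theorem dotp_sum_left {ι : Type*} (s : Finset ι) (v : ι → Fin n → ℝ) (x : Fin n → ℝ) :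
    dotp (∑ i ∈ s, v i) x = ∑ i ∈ s, dotp (v i) x :=
  sum_dotProduct s v x

@[fun_prop]
theorem continuous_dotp (v : Fin n → ℝ) : Continuous (dotp v) := by
  unfold dotp; fun_prop

theorem exists_dotp_eq_of_linearIndependent {ι : Type*} [Fintype ι] {v : ι → Fin n → ℝ}
    (hv : LinearIndependent ℝ v) (c : ι → ℝ) : ∃ x, ∀ i, dotp (v i) x = c i := by
  have hrank : (Matrix.of v).rank = Fintype.card ι := by
    rw [Matrix.rank_eq_finrank_span_row]
    exact finrank_span_eq_card hv
  have hsurj : LinearMap.range (Matrix.of v).mulVecLin = ⊤ :=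
    Submodule.eq_top_of_finrank_eq (by rw [Module.finrank_fintype_fun_eq_card]; exact hrank)
  obtain ⟨x, hx⟩ := LinearMap.range_eq_top.mp hsurj c
  exact ⟨x, fun i => congrFun hx i⟩

theorem isClosed_polytope (η : Fin N → Fin n → ℝ) (κ : Fin N → ℝ) :
    IsClosed (polytope η κ) := by
  simp only [polytope, ofPred_forall]
  exact isClosed_iInter fun i => isClosed_le (continuous_dotp _) continuous_const

theorem setOf_forall_dotp_lt_subset_interior (η : Fin N → Fin n → ℝ) (κ : Fin N → ℝ) :
    {x | ∀ i, dotp (η i) x < κ i} ⊆ interior (polytope η κ) := by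
  refine interior_maximal (fun x hx i => (hx i).le) ?_
  simp only [ofPred_forall]
  exact isOpen_iInter_of_finite fun i => isOpen_lt (continuous_dotp _) continuous_const

theorem interior_polytope_nonempty {η : Fin N → Fin n → ℝ} {κ : Fin N → ℝ}
    (hsimple : IsSimplePoly η κ) (hne : (polytope η κ).Nonempty) :
    (interior (polytope η κ)).Nonempty := by
  obtain ⟨y, hy⟩ := hne
  obtain ⟨v, hv⟩ := exists_dotp_eq_of_linearIndependent (hsimple y hy) fun _ => -1
  have hinward : ∀ᶠ t in 𝓝[>] (0 : ℝ), ∀ i, dotp (η i) (y + t • v) < κ i := by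
    refine eventually_all.mpr fun i => ?_
    simp only [dotp_add_right, dotp_smul_right]
    by_cases hi : dotp (η i) y = κ i
    · filter_upwards [self_mem_nhdsWithin] with t (ht : 0 < t)
      rw [hv ⟨i, hi⟩, hi]
      linarith
    · have hcont : Continuous fun t : ℝ => dotp (η i) y + t * dotp (η i) v := by fun_prop
      refine nhdsWithin_le_nhds ((hcont.tendsto 0).eventually_lt_const ?_)
      simpa using lt_of_le_of_ne (hy i) hi
  obtain ⟨t, ht⟩ := hinward.exists
  exact ⟨_, setOf_forall_dotp_lt_subset_interior η κ ht⟩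

theorem polytope_nonempty_of_analogous {η : Fin N → Fin n → ℝ} {κ κ' : Fin N → ℝ}
    (hfacet : ∀ i, (facet η κ i).Nonempty) (h : Analogous η κ κ') :
    (polytope η κ').Nonempty := by
  rcases isEmpty_or_nonempty (Fin N) with _ | ⟨⟨i⟩⟩
  · exact ⟨0, fun i => isEmptyElim i⟩
  · obtain ⟨x, hx⟩ := (h {i}).mpr (by simpa using hfacet i)
    simp only [Finset.mem_singleton, iInter_iInter_eq_left] at hx
    exact ⟨x, hx.1⟩

theorem exists_pos_dotp_of_isBounded {η : Fin N → Fin n → ℝ} {κ : Fin N → ℝ}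
    (hne : (polytope η κ).Nonempty) (hb : Bornology.IsBounded (polytope η κ))
    {v : Fin n → ℝ} (hv : v ≠ 0) : ∃ i, 0 < dotp (η i) v := by
  by_contra! hle
  obtain ⟨x, hx⟩ := hne
  obtain ⟨R, hR⟩ := hb.exists_norm_le
  have hray : ∀ t : ℝ, 0 ≤ t → t * ‖v‖ ≤ R + ‖x‖ := by
    intro t ht
    have hmem : x + t • v ∈ polytope η κ := fun i => by
      rw [dotp_add_right, dotp_smul_right]
      linarith [hx i, mul_nonpos_of_nonneg_of_nonpos ht (hle i)]
    calc t * ‖v‖ = ‖(x + t • v) - x‖ := by simp [norm_smul, abs_of_nonneg ht]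
      _ ≤ ‖x + t • v‖ + ‖x‖ := norm_sub_le _ _
      _ ≤ R + ‖x‖ := by linarith [hR _ hmem]
  have hv' : 0 < ‖v‖ := norm_pos_iff.mpr hv
  have hR0 : 0 ≤ R + ‖x‖ := by linarith [hR x hx, norm_nonneg x]
  have := hray ((R + ‖x‖ + 1) / ‖v‖) (by positivity)
  rw [div_mul_cancel₀ _ hv'.ne'] at this
  linarith

theorem isBounded_polytope_of_exists_pos_dotp {η : Fin N → Fin n → ℝ}
    (hpos : ∀ v : Fin n → ℝ, v ≠ 0 → ∃ i, 0 < dotp (η i) v) (κ : Fin N → ℝ) :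
    Bornology.IsBounded (polytope η κ) := by
  rcases subsingleton_or_nontrivial (Fin n → ℝ) with _ | _
  · exact Bornology.IsBounded.all _
  set g : (Fin n → ℝ) → ℝ := fun v => ∑ i, max (dotp (η i) v) 0 with hg
  have hg_cont : Continuous g := by fun_prop
  have hg_smul : ∀ (t : ℝ) v, 0 ≤ t → g (t • v) = t * g v := fun t v ht => by
    simp only [hg, Finset.mul_sum, dotp_smul_right, mul_max_of_nonneg _ _ ht, mul_zero]
  obtain ⟨u, hu, hmin⟩ := (isCompact_sphere (0 : Fin n → ℝ) 1).exists_isMinOn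
    (NormedSpace.sphere_nonempty.mpr zero_le_one) hg_cont.continuousOn
  have hgu : 0 < g u := by
    obtain ⟨i, hi⟩ := hpos u (ne_zero_of_mem_unit_sphere ⟨u, hu⟩)
    exact Finset.sum_pos' (fun j _ => le_max_right _ _) ⟨i, Finset.mem_univ i, lt_max_of_lt_left hi⟩
  -- positive homogeneity turns the minimum of `g` on the unit sphere into `g x ≥ ‖x‖ g u`
  have hnorm_le : ∀ x, ‖x‖ * g u ≤ g x := by
    intro x
    rcases eq_or_ne x 0 with rfl | hx
    · rw [norm_zero, zero_mul]
      exact Finset.sum_nonneg fun i _ => le_max_right _ _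
    · have hx' : ‖x‖⁻¹ • x ∈ Metric.sphere (0 : Fin n → ℝ) 1 := by simp [norm_smul, hx]
      calc ‖x‖ * g u ≤ ‖x‖ * g (‖x‖⁻¹ • x) := mul_le_mul_of_nonneg_left (hmin hx') (norm_nonneg x)
        _ = g x := by rw [← hg_smul _ _ (norm_nonneg x), smul_inv_smul₀ (norm_ne_zero_iff.mpr hx)]
  refine isBounded_iff_forall_norm_le.mpr ⟨(∑ i, max (κ i) 0) / g u, fun x hx => ?_⟩
  rw [le_div_iff₀ hgu]
  exact (hnorm_le x).trans (Finset.sum_le_sum fun i _ => max_le_max_right 0 (hx i))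

/-- The affine reflection in the hyperplane `⟪w, x⟫ = d` along `ξ` (when `⟪w, ξ⟫ = 2`). -/
def obliqueReflection (w ξ : Fin n → ℝ) (d : ℝ) (x : Fin n → ℝ) : Fin n → ℝ :=
  x + (d - dotp w x) • ξ

section obliqueReflection

variable {w ξ : Fin n → ℝ} {d : ℝ}

theorem dotp_obliqueReflection (hwξ : dotp w ξ = 2) (x : Fin n → ℝ) :
    dotp w (obliqueReflection w ξ d x) = 2 * d - dotp w x := by
  rw [obliqueReflection, dotp_add_right, dotp_smul_right, hwξ]
  ring

theorem obliqueReflection_involutive (hwξ : dotp w ξ = 2) :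
    Function.Involutive (obliqueReflection w ξ d) := fun x => by
  rw [obliqueReflection, dotp_obliqueReflection hwξ, obliqueReflection]
  module

theorem measurePreserving_obliqueReflection (hwξ : dotp w ξ = 2) :
    MeasurePreserving (obliqueReflection w ξ d) := by
  let A : (Fin n → ℝ) →ₗ[ℝ] Fin n → ℝ := LinearMap.id - (dotProductBilin ℝ ℝ w).smulRight ξ
  have hA : ∀ x, A x = obliqueReflection w ξ 0 x := fun x => by
    simp [A, obliqueReflection, sub_eq_add_neg, dotp, dotProduct]
  have hρ : obliqueReflection w ξ d = (· + d • ξ) ∘ A := funext fun x => by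
    simp only [Function.comp_apply, hA, obliqueReflection]
    module
  rw [hρ]
  exact (measurePreserving_add_right volume _).comp
    (A.measurePreserving_of_involutive fun x => by
      simp only [hA, obliqueReflection_involutive hwξ x])

theorem dotp_setAverage_eq_of_mapsTo_obliqueReflection {s : Set (Fin n → ℝ)} (hs : IsCompact s)
    (hs0 : volume s ≠ 0) (hwξ : dotp w ξ = 2)
    (hmaps : MapsTo (obliqueReflection w ξ d) s s) :
    dotp w (⨍ x in s, x) = d := by
  have hinv := obliqueReflection_involutive (d := d) hwξ
  have hpre : obliqueReflection w ξ d ⁻¹' s = s :=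
    Subset.antisymm (fun x hx => hinv x ▸ hmaps hx) fun x hx => hmaps hx
  have hemb : MeasurableEmbedding (obliqueReflection w ξ d) :=
    (MeasurableEquiv.mk (hinv.toPerm _) (measurePreserving_obliqueReflection hwξ).measurable
      (measurePreserving_obliqueReflection hwξ).measurable).measurableEmbedding
  have hint : ∫ x in s, dotp w x = volume.real s * d := by
    have h := (measurePreserving_obliqueReflection hwξ).setIntegral_preimage_emb hemb (dotp w) s
    simp only [hpre, dotp_obliqueReflection hwξ] at h
    rw [integral_sub (integrableOn_const (C := 2 * d) hs.measure_lt_top.ne)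
      ((continuous_dotp w).continuousOn.integrableOn_compact hs), setIntegral_const,
      smul_eq_mul] at h
    linarith
  let L : (Fin n → ℝ) →L[ℝ] ℝ := LinearMap.toContinuousLinearMap (dotProductBilin ℝ ℝ w)
  have hcomm : ∫ x in s, dotp w x = dotp w (∫ x in s, x) :=
    L.integral_comp_comm (continuousOn_id.integrableOn_compact hs)
  have hvol : volume.real s ≠ 0 := (measureReal_ne_zero_iff hs.measure_lt_top.ne).mpr hs0
  rw [setAverage_eq, dotp_smul_right, ← hcomm, hint]
  field_simp

end obliqueReflection

theorem mapsTo_obliqueReflection_polytope {η : Fin N → Fin n → ℝ} (κ : Fin N → ℝ)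
    {i j : Fin N} {ξ : Fin n → ℝ} (hi : dotp (η i) ξ = 1) (hj : dotp (η j) ξ = -1)
    (hk : ∀ k, k ≠ i → k ≠ j → dotp (η k) ξ = 0) :
    MapsTo (obliqueReflection (η i - η j) ξ (κ i - κ j)) (polytope η κ) (polytope η κ) := by
  intro x hx k
  rw [obliqueReflection, dotp_add_right, dotp_smul_right, dotp_sub_left]
  by_cases hki : k = i
  · subst hki; rw [hi]; linarith [hx j]
  by_cases hkj : k = j
  · subst hkj; rw [hj]; linarith [hx i]
  rw [hk k hki hkj, mul_zero, add_zero]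
  exact hx k

theorem FacetEquiv.symm {η : Fin N → Fin n → ℝ} {i j : Fin N} (h : FacetEquiv η i j) :
    FacetEquiv η j i := by
  rcases h with rfl | ⟨ξ, hi, hj, hk⟩
  · exact Or.inl rfl
  refine Or.inr ⟨-ξ, ?_, ?_, fun k hkj hki => ?_⟩
  · rw [dotp_neg_right, hj, neg_neg]
  · rw [dotp_neg_right, hi]
  · rw [dotp_neg_right, hk k hki hkj, neg_zero]

theorem FacetEquiv.trans {η : Fin N → Fin n → ℝ} {i j l : Fin N} (h : FacetEquiv η i j)
    (h' : FacetEquiv η j l) : FacetEquiv η i l := by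
  rcases h with rfl | ⟨ξ, hi, hj, hk⟩
  · exact h'
  rcases h' with rfl | ⟨ξ', hj', hl', hk'⟩
  · exact Or.inr ⟨ξ, hi, hj, hk⟩
  have hij : i ≠ j := by rintro rfl; linarith
  have hjl : j ≠ l := by rintro rfl; linarith
  rcases eq_or_ne i l with rfl | hil
  · exact Or.inl rfl
  refine Or.inr ⟨ξ + ξ', ?_, ?_, fun m hmi hml => ?_⟩
  · rw [dotp_add_right, hi, hk' i hij hil, add_zero]
  · rw [dotp_add_right, hk l hil.symm hjl.symm, hl', zero_add]
  · rcases eq_or_ne m j with rfl | hmj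
    · rw [dotp_add_right, hj, hj', neg_add_cancel]
    · rw [dotp_add_right, hk m hmi hmj, hk' m hmj hml, add_zero]

def facetEquivSetoid (η : Fin N → Fin n → ℝ) : Setoid (Fin N) where
  r := FacetEquiv η
  iseqv := ⟨fun _ => Or.inl rfl, FacetEquiv.symm, FacetEquiv.trans⟩

theorem isEquivClass_filter_facetEquiv (η : Fin N → Fin n → ℝ) (i : Fin N)
    [DecidablePred (FacetEquiv η i)] : IsEquivClass η {j | FacetEquiv η i j} := by
  have hmem : ∀ j, j ∈ ({j | FacetEquiv η i j} : Finset (Fin N)) ↔ FacetEquiv η i j := by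
    simp
  exact ⟨⟨i, (hmem i).2 (Or.inl rfl)⟩, fun a ha b hb => ((hmem a).1 ha).symm.trans ((hmem b).1 hb),
    fun a ha m hm => (hmem m).2 (((hmem a).1 ha).trans hm)⟩

theorem FacetEquiv.dotp_centroid_sub {η : Fin N → Fin n → ℝ} {κ : Fin N → ℝ}
    (hcpt : IsCompact (polytope η κ)) (hvol : volume (polytope η κ) ≠ 0) {i j : Fin N}
    (h : FacetEquiv η i j) :
    dotp (η i) (centroid η κ) - κ i = dotp (η j) (centroid η κ) - κ j := by
  rcases h with rfl | ⟨ξ, hi, hj, hk⟩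
  · rfl
  have hwξ : dotp (η i - η j) ξ = 2 := by rw [dotp_sub_left, hi, hj]; norm_num
  have := dotp_setAverage_eq_of_mapsTo_obliqueReflection hcpt hvol hwξ
    (mapsTo_obliqueReflection_polytope κ hi hj hk)
  rw [dotp_sub_left] at this
  rw [centroid]
  linarith

end MassLinearPaper

/-- An inessential function `H = Σ β_i η_i` satisfies `⟨H, c_Δ(κ)⟩ = Σ β_i κ_i` on the
chamber; in particular it is mass linear. -/
theorem stmt13 {n N : ℕ} (η : Fin N → Fin n → ℝ) (κ : Fin N → ℝ) (H : Fin n → ℝ)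
    (β : Fin N → ℝ) (hΔ : GoodPolytope η κ)
    (hHβ : H = ∑ i, β i • η i)
    (hβ : ∀ I : Finset (Fin N), IsEquivClass η I → ∑ i ∈ I, β i = 0) :
    ∀ κ' ∈ chamber η κ, dotp H (centroid η κ') = ∑ i, β i * κ' i := by
  classical
  intro κ' hκ'
  obtain ⟨hsimple, hanalog⟩ := connectedComponentIn_subset _ _ hκ'
  obtain ⟨-, hbdd, hint, hfacet⟩ := hΔ
  have hpos : ∀ v : Fin n → ℝ, v ≠ 0 → ∃ i, 0 < dotp (η i) v := fun v hv =>
    exists_pos_dotp_of_isBounded (hint.mono interior_subset) hbdd hv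
  have hcpt : IsCompact (polytope η κ') := Metric.isCompact_of_isClosed_isBounded
    (isClosed_polytope η κ') (isBounded_polytope_of_exists_pos_dotp hpos κ')
  have hvol : volume (polytope η κ') ≠ 0 := (Measure.measure_pos_of_nonempty_interior _
    (interior_polytope_nonempty hsimple (polytope_nonempty_of_analogous hfacet hanalog))).ne'
  have hclass : ∑ i, β i * (dotp (η i) (centroid η κ') - κ' i) = 0 :=
    sum_mul_eq_zero_of_sum_class_eq_zero (facetEquivSetoid η)
      (fun i j h => FacetEquiv.dotp_centroid_sub hcpt hvol h)
      fun i => hβ _ (isEquivClass_filter_facetEquiv η i)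
  rw [hHβ, dotp_sum_left]
  simp only [dotp_smul_left, mul_sub, Finset.sum_sub_distrib] at hclass ⊢
  linarith
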